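/- Let e₁, e₂ ∈ L²(Ω;ℝ²) with ⟨e₁⟩ = (1,0)ᵀ and ⟨e₂⟩ = (0,1)ᵀ. Let A be the symmetric 2×2 matrix with entries a_{ij} = ⟨σ eᵢ·eⱼ⟩ and b' = ⟨e₁·R⊥e₂⟩. Then det A ≥ σ₂²b'², and Tr A − 2b'σ₂ ≤ (f₂/σ₂ + 2f₁/(σ₁+σ₂))·(det A − b'²σ₂²). In particular, if det A > σ₂²b'², then f₁ ≤ (σ₂(σ₁+σ₂)/(σ₁−σ₂))·[1/σ₂ − (Tr A − 2b'σ₂)/(det A − b'²σ₂²)]. -/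

import Mathlib

open MeasureTheory Matrix

noncomputable section

/-- The 90°-rotation matrix `R⊥` with rows `(0,1)` and `(-1,0)`. -/
def Rperp : Matrix (Fin 2) (Fin 2) ℝ := !![0, 1; -1, 0]

/-- Average of a scalar function over `Ω`. -/
def avg (Ω : Set (Fin 2 → ℝ)) (h : (Fin 2 → ℝ) → ℝ) : ℝ :=
  ((volume Ω).toReal)⁻¹ * ∫ x in Ω, h x

/-!
For `σ ≥ σ₂` the translated energy `σ (|u|² + |w|²) - 2 σ₂ u ⬝ R⊥w` splits into
`(σ + σ₂)/2 |u - R⊥w|² + (σ - σ₂)/2 |u + R⊥w|²`, so it dominates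
`2 α ⬝ (u - R⊥w) - 2/(σ + σ₂) |α|²` pointwise. Apply this to `u = ξ₁ e₁ + ξ₂ e₂`,
`w = η₁ e₁ + η₂ e₂` and average: since `u ⬝ R⊥w = (ξ ⬝ R⊥η) (e₁ ⬝ R⊥e₂)` pointwise, for all
`ξ η α` we get `2 α ⬝ (ξ - R⊥η) - c |α|² ≤ ξ ⬝ Aξ + η ⬝ Aη - 2 σ₂ b' (ξ ⬝ R⊥η)` with
`c = ⟨2/(σ + σ₂)⟩ = f₂/σ₂ + 2 f₁/(σ₁ + σ₂)`. Taking `α = 0`, resp. the optimal `α`, the pair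
`(A, σ₂ b')`, resp. `(c A - 1, c σ₂ b' - 1)`, satisfies `2 β (ξ ⬝ R⊥η) ≤ ξ ⬝ Mξ + η ⬝ Mη`,
which for a symmetric `2 × 2` matrix `M` forces `β² ≤ det M`. Expanding `det (c A - 1)` gives
the trace bound, and the volume fraction bound is a rearrangement of it.
-/

theorem dotProduct_Rperp_mulVec (ξ η : Fin 2 → ℝ) :
    ξ ⬝ᵥ Rperp *ᵥ η = ξ 0 * η 1 - ξ 1 * η 0 := by
  simp [Rperp, dotProduct, mulVec, Fin.sum_univ_two]
  ring

theorem dotProduct_sub_Rperp_mulVec_self (ξ η : Fin 2 → ℝ) :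
    (ξ - Rperp *ᵥ η) ⬝ᵥ (ξ - Rperp *ᵥ η) = ξ ⬝ᵥ ξ + η ⬝ᵥ η - 2 * (ξ ⬝ᵥ Rperp *ᵥ η) := by
  simp [Rperp, dotProduct, mulVec, Fin.sum_univ_two]
  ring

theorem sq_le_det_of_two_mul_dotProduct_Rperp_le {M : Matrix (Fin 2) (Fin 2) ℝ} (hM : M.IsSymm)
    {β : ℝ} (h : ∀ ξ η, 2 * β * (ξ ⬝ᵥ Rperp *ᵥ η) ≤ ξ ⬝ᵥ M *ᵥ ξ + η ⬝ᵥ M *ᵥ η) :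
    β ^ 2 ≤ M.det := by
  have hM' : M 1 0 = M 0 1 := hM.apply 0 1
  have h' : ∀ a b c d : ℝ, 2 * β * (a * d - b * c) ≤
      M 0 0 * a ^ 2 + 2 * M 0 1 * a * b + M 1 1 * b ^ 2 +
        (M 0 0 * c ^ 2 + 2 * M 0 1 * c * d + M 1 1 * d ^ 2) := by
    intro a b c d
    convert h ![a, b] ![c, d] using 1
    · rw [dotProduct_Rperp_mulVec]
      simp
    · simp [dotProduct, mulVec, Fin.sum_univ_two, hM']
      ring
  rw [det_fin_two, hM']
  -- these choices of `(ξ, η)` turn `h` into `M₀₀ (det M - β²) ≥ 0` and `M₁₁ (det M - β²) ≥ 0`;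
  -- if the trace vanishes then `M = 0`, and `h` forces `β = 0`
  have h₀ := h' β 0 (-M 0 1) (M 0 0)
  have h₁ := h' 0 β (-M 1 1) (M 0 1)
  have ha := h' 1 0 0 0
  have hd := h' 0 1 0 0
  rcases (add_nonneg (by linarith : 0 ≤ M 0 0) (by linarith : 0 ≤ M 1 1)).lt_or_eq with htr | htr
  · nlinarith
  · have hb₁ := h' 1 1 0 0
    have hb₂ := h' 1 (-1) 0 0
    have hβ := h' 1 0 0 β
    nlinarith

/-- The right side equals `(s + s₂)/2 |u - R⊥w|² + (s - s₂)/2 |u + R⊥w|²`, and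
`(s + s₂)/2 |z|² ≥ 2 α ⬝ z - 2/(s + s₂) |α|²` by completing the square. -/
theorem pointwise_translation_bound {s s₂ : ℝ} (hs₂ : 0 < s₂) (hs : s₂ ≤ s) (u w α : Fin 2 → ℝ) :
    2 * (α ⬝ᵥ (u - Rperp *ᵥ w)) - (α ⬝ᵥ α) * (2 / (s + s₂)) ≤
      s * (u ⬝ᵥ u) + s * (w ⬝ᵥ w) - 2 * s₂ * (u ⬝ᵥ Rperp *ᵥ w) := by
  have hk : 0 < s + s₂ := by linarith
  simp only [Rperp, dotProduct, mulVec, Fin.sum_univ_two, Pi.sub_apply, of_apply, cons_val',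
    cons_val_zero, cons_val_one, empty_val', cons_val_fin_one]
  rw [mul_div_assoc', sub_le_iff_le_add, ← sub_le_iff_le_add', le_div_iff₀ hk]
  nlinarith [sq_nonneg ((s + s₂) * (u 0 - w 1) - 2 * α 0),
    sq_nonneg ((s + s₂) * (u 1 + w 0) - 2 * α 1),
    mul_nonneg (mul_nonneg hk.le (sub_nonneg.2 hs)) (sq_nonneg (u 0 + w 1)),
    mul_nonneg (mul_nonneg hk.le (sub_nonneg.2 hs)) (sq_nonneg (u 1 - w 0))]

theorem integrable_dotProduct {X : Type*} [MeasurableSpace X] {μ : Measure X} {n : Type*}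
    [Fintype n] {u v : X → n → ℝ} (hu : MemLp u 2 μ) (hv : MemLp v 2 μ) :
    Integrable (fun x => u x ⬝ᵥ v x) μ :=
  integrable_finsetSum _ fun k _ => (hu.eval k).integrable_mul (hv.eval k)

theorem memLp_mulVec {X : Type*} [MeasurableSpace X] {μ : Measure X} {n : Type*} [Fintype n]
    [DecidableEq n] (M : Matrix n n ℝ) {v : X → n → ℝ} (hv : MemLp v 2 μ) :
    MemLp (fun x => M *ᵥ v x) 2 μ :=
  (LinearMap.toContinuousLinearMap (Matrix.toLin' M)).comp_memLp' hv

section Average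

variable {Ω : Set (Fin 2 → ℝ)} {f g : (Fin 2 → ℝ) → ℝ}

theorem avg_add (hf : IntegrableOn f Ω) (hg : IntegrableOn g Ω) :
    avg Ω (fun x => f x + g x) = avg Ω f + avg Ω g := by
  simp only [avg, integral_add hf hg, mul_add]

theorem avg_sub (hf : IntegrableOn f Ω) (hg : IntegrableOn g Ω) :
    avg Ω (fun x => f x - g x) = avg Ω f - avg Ω g := by
  simp only [avg, integral_sub hf hg, mul_sub]

theorem avg_const_mul (c : ℝ) (f : (Fin 2 → ℝ) → ℝ) :
    avg Ω (fun x => c * f x) = c * avg Ω f := by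
  simp only [avg, integral_const_mul]
  ring

theorem avg_sum {ι : Type*} (s : Finset ι) {F : ι → (Fin 2 → ℝ) → ℝ}
    (hF : ∀ i ∈ s, IntegrableOn (F i) Ω) :
    avg Ω (fun x => ∑ i ∈ s, F i x) = ∑ i ∈ s, avg Ω (F i) := by
  simp only [avg, integral_finsetSum s hF, Finset.mul_sum]

theorem avg_const (hΩ : 0 < (volume Ω).toReal) (c : ℝ) : avg Ω (fun _ => c) = c := by
  simp [avg, measureReal_def, hΩ.ne']

theorem avg_mono (hf : IntegrableOn f Ω) (hg : IntegrableOn g Ω) (hfg : f ≤ g) :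
    avg Ω f ≤ avg Ω g :=
  mul_le_mul_of_nonneg_left (integral_mono hf hg hfg) (by positivity)

theorem avg_dotProduct_left [IsFiniteMeasure (volume.restrict Ω)] {v : (Fin 2 → ℝ) → Fin 2 → ℝ}
    (hv : MemLp v 2 (volume.restrict Ω)) (β : Fin 2 → ℝ) :
    avg Ω (fun x => β ⬝ᵥ v x) = β ⬝ᵥ fun k => avg Ω fun x => v x k := by
  simp only [dotProduct]
  rw [avg_sum _ fun k _ => ((hv.eval k).integrable one_le_two).const_mul (β k)]
  simp only [avg_const_mul]

end Average

def fieldComb (e : Fin 2 → (Fin 2 → ℝ) → Fin 2 → ℝ) (ξ : Fin 2 → ℝ) :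
    (Fin 2 → ℝ) → Fin 2 → ℝ :=
  fun x => ∑ i, ξ i • e i x

def energyMatrix (Ω : Set (Fin 2 → ℝ)) (σ : (Fin 2 → ℝ) → ℝ)
    (e : Fin 2 → (Fin 2 → ℝ) → Fin 2 → ℝ) : Matrix (Fin 2) (Fin 2) ℝ :=
  Matrix.of fun i j => avg Ω fun x => σ x * (e i x ⬝ᵥ e j x)

section Fields

variable {Ω : Set (Fin 2 → ℝ)} {σ : (Fin 2 → ℝ) → ℝ} {e : Fin 2 → (Fin 2 → ℝ) → Fin 2 → ℝ}

theorem energyMatrix_isSymm : (energyMatrix Ω σ e).IsSymm := by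
  refine IsSymm.ext fun i j => ?_
  simp only [energyMatrix, of_apply, dotProduct_comm (e i _)]

theorem fieldComb_dotProduct_Rperp_mulVec (ξ η x : Fin 2 → ℝ) :
    fieldComb e ξ x ⬝ᵥ Rperp *ᵥ fieldComb e η x =
      (ξ ⬝ᵥ Rperp *ᵥ η) * (e 0 x ⬝ᵥ Rperp *ᵥ e 1 x) := by
  simp only [dotProduct_Rperp_mulVec, fieldComb, Fin.sum_univ_two, Pi.add_apply, Pi.smul_apply,
    smul_eq_mul]
  ring

theorem memLp_fieldComb (he : ∀ i, MemLp (e i) 2 (volume.restrict Ω)) (ξ : Fin 2 → ℝ) :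
    MemLp (fieldComb e ξ) 2 (volume.restrict Ω) := by
  have hsum : fieldComb e ξ = ∑ i, ξ i • e i := by
    ext x
    simp [fieldComb]
  rw [hsum]
  exact memLp_finsetSum' _ fun i _ => (he i).const_smul (ξ i)

theorem avg_fieldComb_apply [IsFiniteMeasure (volume.restrict Ω)]
    (he : ∀ i, MemLp (e i) 2 (volume.restrict Ω))
    (he_avg : ∀ i k, avg Ω (fun x => e i x k) = (1 : Matrix (Fin 2) (Fin 2) ℝ) i k)
    (ξ : Fin 2 → ℝ) (k : Fin 2) :
    avg Ω (fun x => fieldComb e ξ x k) = ξ k := by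
  simp only [fieldComb, Finset.sum_apply, Pi.smul_apply, smul_eq_mul]
  rw [avg_sum _ fun i _ => (((he i).eval k).integrable one_le_two).const_mul (ξ i)]
  simp [avg_const_mul, he_avg, Matrix.one_apply]

theorem avg_dotProduct_fieldComb [IsFiniteMeasure (volume.restrict Ω)]
    (he : ∀ i, MemLp (e i) 2 (volume.restrict Ω))
    (he_avg : ∀ i k, avg Ω (fun x => e i x k) = (1 : Matrix (Fin 2) (Fin 2) ℝ) i k)
    (β ξ : Fin 2 → ℝ) :
    avg Ω (fun x => β ⬝ᵥ fieldComb e ξ x) = β ⬝ᵥ ξ := by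
  rw [avg_dotProduct_left (memLp_fieldComb he ξ)]
  simp only [avg_fieldComb_apply he he_avg]

theorem integrable_mul_dotProduct [IsFiniteMeasure (volume.restrict Ω)] {σ₁ σ₂ : ℝ}
    (hσm : Measurable σ) (hσ : ∀ x, σ x ∈ Set.Icc σ₂ σ₁) {u v : (Fin 2 → ℝ) → Fin 2 → ℝ}
    (hu : MemLp u 2 (volume.restrict Ω)) (hv : MemLp v 2 (volume.restrict Ω)) :
    IntegrableOn (fun x => σ x * (u x ⬝ᵥ v x)) Ω :=
  (integrable_dotProduct hu hv).bdd_mul hσm.aestronglyMeasurable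
    (ae_of_all _ fun x => abs_le_max_abs_abs (hσ x).1 (hσ x).2)

theorem avg_mul_dotProduct_fieldComb [IsFiniteMeasure (volume.restrict Ω)] {σ₁ σ₂ : ℝ}
    (hσm : Measurable σ) (hσ : ∀ x, σ x ∈ Set.Icc σ₂ σ₁)
    (he : ∀ i, MemLp (e i) 2 (volume.restrict Ω)) (ξ η : Fin 2 → ℝ) :
    avg Ω (fun x => σ x * (fieldComb e ξ x ⬝ᵥ fieldComb e η x)) =
      ξ ⬝ᵥ energyMatrix Ω σ e *ᵥ η := by
  have hexpand : (fun x => σ x * (fieldComb e ξ x ⬝ᵥ fieldComb e η x)) =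
      fun x => ∑ i, ∑ j, ξ i * η j * (σ x * (e i x ⬝ᵥ e j x)) := by
    ext x
    simp only [fieldComb, sum_dotProduct, dotProduct_sum, smul_dotProduct, dotProduct_smul,
      smul_eq_mul, Finset.mul_sum]
    rw [Finset.sum_comm]
    exact Finset.sum_congr rfl fun i _ => Finset.sum_congr rfl fun j _ => by ring
  have hint : ∀ i j, IntegrableOn (fun x => σ x * (e i x ⬝ᵥ e j x)) Ω := fun i j =>
    integrable_mul_dotProduct hσm hσ (he i) (he j)
  rw [hexpand, avg_sum _ fun i _ => integrable_finsetSum _ fun j _ => (hint i j).const_mul _]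
  simp only [avg_sum _ fun j _ => (hint _ j).const_mul _, avg_const_mul]
  simp only [dotProduct, mulVec, energyMatrix, of_apply, Finset.mul_sum]
  exact Finset.sum_congr rfl fun i _ => Finset.sum_congr rfl fun j _ => by ring

end Fields

def crossAvg (Ω : Set (Fin 2 → ℝ)) (e : Fin 2 → (Fin 2 → ℝ) → Fin 2 → ℝ) : ℝ :=
  avg Ω fun x => e 0 x ⬝ᵥ Rperp *ᵥ e 1 x

section Translation

variable {Ω : Set (Fin 2 → ℝ)} {σ : (Fin 2 → ℝ) → ℝ} {e : Fin 2 → (Fin 2 → ℝ) → Fin 2 → ℝ}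
  {σ₁ σ₂ : ℝ}

theorem integrableOn_two_div_add [IsFiniteMeasure (volume.restrict Ω)] (hσ₂ : 0 < σ₂)
    (hσm : Measurable σ) (hσ : ∀ x, σ x ∈ Set.Icc σ₂ σ₁) :
    IntegrableOn (fun x => 2 / (σ x + σ₂)) Ω :=
  Integrable.of_bound (measurable_const.div (hσm.add_const σ₂)).aestronglyMeasurable (2 / σ₂) <|
    ae_of_all _ fun x => by
      have hpos : 0 < σ x + σ₂ := by linarith [(hσ x).1]
      rw [Real.norm_of_nonneg (by positivity)]
      exact div_le_div_of_nonneg_left zero_le_two hσ₂ (by linarith [(hσ x).1])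

theorem avg_translation_bound [IsFiniteMeasure (volume.restrict Ω)] (hσ₂ : 0 < σ₂)
    (hσm : Measurable σ) (hσ : ∀ x, σ x ∈ Set.Icc σ₂ σ₁)
    (he : ∀ i, MemLp (e i) 2 (volume.restrict Ω))
    (he_avg : ∀ i k, avg Ω (fun x => e i x k) = (1 : Matrix (Fin 2) (Fin 2) ℝ) i k)
    (ξ η α : Fin 2 → ℝ) :
    2 * (α ⬝ᵥ (ξ - Rperp *ᵥ η)) - avg Ω (fun x => 2 / (σ x + σ₂)) * (α ⬝ᵥ α) ≤
      ξ ⬝ᵥ energyMatrix Ω σ e *ᵥ ξ + η ⬝ᵥ energyMatrix Ω σ e *ᵥ η -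
        2 * σ₂ * (ξ ⬝ᵥ Rperp *ᵥ η) * crossAvg Ω e := by
  have hu := memLp_fieldComb he ξ
  have hw := memLp_fieldComb he η
  have hαu := integrable_dotProduct (memLp_const α) hu
  have hαw := integrable_dotProduct (memLp_const (vecMul α Rperp)) hw
  have hinv := integrableOn_two_div_add (Ω := Ω) hσ₂ hσm hσ
  have huu := integrable_mul_dotProduct hσm hσ hu hu
  have hww := integrable_mul_dotProduct hσm hσ hw hw
  have hcross := integrable_dotProduct (he 0) (memLp_mulVec Rperp (he 1))
  have hlower : avg Ω (fun x => 2 * (α ⬝ᵥ fieldComb e ξ x - vecMul α Rperp ⬝ᵥ fieldComb e η x) -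
      (α ⬝ᵥ α) * (2 / (σ x + σ₂))) =
      2 * (α ⬝ᵥ (ξ - Rperp *ᵥ η)) - avg Ω (fun x => 2 / (σ x + σ₂)) * (α ⬝ᵥ α) := by
    rw [avg_sub ((hαu.sub' hαw).const_mul 2) (hinv.const_mul _), avg_const_mul, avg_const_mul,
      avg_sub hαu hαw, avg_dotProduct_fieldComb he he_avg, avg_dotProduct_fieldComb he he_avg,
      dotProduct_sub, dotProduct_mulVec]
    ring
  have hupper : avg Ω (fun x => σ x * (fieldComb e ξ x ⬝ᵥ fieldComb e ξ x) +
      σ x * (fieldComb e η x ⬝ᵥ fieldComb e η x) -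
      2 * σ₂ * (ξ ⬝ᵥ Rperp *ᵥ η) * (e 0 x ⬝ᵥ Rperp *ᵥ e 1 x)) =
      ξ ⬝ᵥ energyMatrix Ω σ e *ᵥ ξ + η ⬝ᵥ energyMatrix Ω σ e *ᵥ η -
        2 * σ₂ * (ξ ⬝ᵥ Rperp *ᵥ η) * crossAvg Ω e := by
    rw [avg_sub (huu.fun_add hww) (hcross.const_mul _), avg_add huu hww, avg_const_mul,
      avg_mul_dotProduct_fieldComb hσm hσ he, avg_mul_dotProduct_fieldComb hσm hσ he, crossAvg]
  rw [← hlower, ← hupper]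
  refine avg_mono (((hαu.sub' hαw).const_mul 2).sub' (hinv.const_mul _))
    ((huu.fun_add hww).sub' (hcross.const_mul _)) fun x => ?_
  have h := pointwise_translation_bound hσ₂ (hσ x).1 (fieldComb e ξ x) (fieldComb e η x) α
  rw [fieldComb_dotProduct_Rperp_mulVec, dotProduct_sub, dotProduct_mulVec] at h
  linarith

end Translation

section Bounds

variable {Ω : Set (Fin 2 → ℝ)} {σ : (Fin 2 → ℝ) → ℝ} {e : Fin 2 → (Fin 2 → ℝ) → Fin 2 → ℝ}
  {σ₁ σ₂ : ℝ}

theorem sq_mul_sq_crossAvg_le_det [IsFiniteMeasure (volume.restrict Ω)] (hσ₂ : 0 < σ₂)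
    (hσm : Measurable σ) (hσ : ∀ x, σ x ∈ Set.Icc σ₂ σ₁)
    (he : ∀ i, MemLp (e i) 2 (volume.restrict Ω))
    (he_avg : ∀ i k, avg Ω (fun x => e i x k) = (1 : Matrix (Fin 2) (Fin 2) ℝ) i k) :
    σ₂ ^ 2 * crossAvg Ω e ^ 2 ≤ (energyMatrix Ω σ e).det := by
  rw [← mul_pow]
  refine sq_le_det_of_two_mul_dotProduct_Rperp_le energyMatrix_isSymm fun ξ η => ?_
  have h := avg_translation_bound hσ₂ hσm hσ he he_avg ξ η 0
  simp only [zero_dotProduct, mul_zero, sub_zero] at h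
  linarith

theorem two_div_add_le_avg (hΩ : 0 < (volume Ω).toReal) [IsFiniteMeasure (volume.restrict Ω)]
    (hσ₂ : 0 < σ₂) (hσm : Measurable σ) (hσ : ∀ x, σ x ∈ Set.Icc σ₂ σ₁) :
    2 / (σ₁ + σ₂) ≤ avg Ω (fun x => 2 / (σ x + σ₂)) := by
  rw [← avg_const hΩ (2 / (σ₁ + σ₂))]
  refine avg_mono (integrable_const _) (integrableOn_two_div_add hσ₂ hσm hσ) fun x => ?_
  have := hσ x
  exact div_le_div_of_nonneg_left zero_le_two (by linarith [this.1]) (by linarith [this.2])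

theorem trace_sub_le_avg_mul_det_sub (hΩ : 0 < (volume Ω).toReal)
    [IsFiniteMeasure (volume.restrict Ω)] (hσ₂ : 0 < σ₂)
    (hσm : Measurable σ) (hσ : ∀ x, σ x ∈ Set.Icc σ₂ σ₁)
    (he : ∀ i, MemLp (e i) 2 (volume.restrict Ω))
    (he_avg : ∀ i k, avg Ω (fun x => e i x k) = (1 : Matrix (Fin 2) (Fin 2) ℝ) i k) :
    (energyMatrix Ω σ e).trace - 2 * crossAvg Ω e * σ₂ ≤
      avg Ω (fun x => 2 / (σ x + σ₂)) *
        ((energyMatrix Ω σ e).det - crossAvg Ω e ^ 2 * σ₂ ^ 2) := by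
  set b := crossAvg Ω e
  set c := avg Ω (fun x => 2 / (σ x + σ₂))
  have hc : 0 < c := by
    have hσ₁₂ : 0 < σ₁ + σ₂ := by linarith [(hσ 0).1, (hσ 0).2]
    exact (div_pos two_pos hσ₁₂).trans_le (two_div_add_le_avg hΩ hσ₂ hσm hσ)
  -- `α = c⁻¹ (ξ - R⊥η)` maximizes the left side of `avg_translation_bound`
  have hquad : ∀ ξ η : Fin 2 → ℝ, 2 * (c * σ₂ * b - 1) * (ξ ⬝ᵥ Rperp *ᵥ η) ≤
      ξ ⬝ᵥ (c • energyMatrix Ω σ e - 1) *ᵥ ξ + η ⬝ᵥ (c • energyMatrix Ω σ e - 1) *ᵥ η := by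
    intro ξ η
    have h := avg_translation_bound hσ₂ hσm hσ he he_avg ξ η (c⁻¹ • (ξ - Rperp *ᵥ η))
    simp only [smul_dotProduct, dotProduct_smul, smul_eq_mul,
      dotProduct_sub_Rperp_mulVec_self] at h
    simp only [sub_mulVec, smul_mulVec, one_mulVec, dotProduct_sub, dotProduct_smul,
      smul_eq_mul]
    have hopt : ∀ z : ℝ, 2 * (c⁻¹ * z) - c * (c⁻¹ * (c⁻¹ * z)) = c⁻¹ * z := fun z => by
      field_simp
      ring
    rw [hopt, inv_mul_le_iff₀ hc] at h
    linarith
  have hdet := sq_le_det_of_two_mul_dotProduct_Rperp_le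
    ((energyMatrix_isSymm.smul c).sub isSymm_one) hquad
  have hA : energyMatrix Ω σ e 1 0 = energyMatrix Ω σ e 0 1 := energyMatrix_isSymm.apply 0 1
  simp only [det_fin_two, Matrix.sub_apply, Matrix.smul_apply, one_apply_eq, one_apply_ne,
    zero_ne_one, one_ne_zero, ne_eq, not_false_eq_true, smul_eq_mul, sub_zero, hA] at hdet
  rw [trace_fin_two, det_fin_two, hA]
  refine le_of_mul_le_mul_left ?_ hc
  linear_combination hdet

end Bounds

section TwoPhase

variable {Ω : Set (Fin 2 → ℝ)} {χ₁ σ : (Fin 2 → ℝ) → ℝ} {σ₁ σ₂ : ℝ}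

theorem avg_two_div_add_of_two_phase (hΩ : 0 < (volume Ω).toReal)
    [IsFiniteMeasure (volume.restrict Ω)] (hχm : Measurable χ₁) (hχ : ∀ x, χ₁ x = 0 ∨ χ₁ x = 1)
    (hσ : ∀ x, σ x = σ₁ * χ₁ x + σ₂ * (1 - χ₁ x)) :
    avg Ω (fun x => 2 / (σ x + σ₂)) = (1 - avg Ω χ₁) / σ₂ + 2 * avg Ω χ₁ / (σ₁ + σ₂) := by
  have hχint : IntegrableOn χ₁ Ω := Integrable.of_bound hχm.aestronglyMeasurable 1 <|
    ae_of_all _ fun x => by rcases hχ x with h | h <;> simp [h]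
  have hpt : (fun x => 2 / (σ x + σ₂)) = fun x => 1 / σ₂ + (2 / (σ₁ + σ₂) - 1 / σ₂) * χ₁ x := by
    ext x
    rcases hχ x with h | h <;> simp only [hσ, h] <;> ring
  rw [hpt, avg_add (integrable_const _) (hχint.const_mul _), avg_const hΩ, avg_const_mul]
  ring

end TwoPhase

theorem le_mul_inv_sub_of_le_two_phase_mean {σ₁ σ₂ f r : ℝ} (hσ₂ : 0 < σ₂) (hσ : σ₂ < σ₁)
    (h : r ≤ (1 - f) / σ₂ + 2 * f / (σ₁ + σ₂)) :
    f ≤ σ₂ * (σ₁ + σ₂) / (σ₁ - σ₂) * (1 / σ₂ - r) := by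
  have hsum : 0 < σ₁ + σ₂ := by linarith
  have hK : 0 ≤ σ₂ * (σ₁ + σ₂) / (σ₁ - σ₂) := div_nonneg (by positivity) (by linarith)
  calc f = σ₂ * (σ₁ + σ₂) / (σ₁ - σ₂) * (1 / σ₂ - ((1 - f) / σ₂ + 2 * f / (σ₁ + σ₂))) := by
        field_simp [hsum.ne', (by linarith : σ₁ - σ₂ ≠ 0)]
        ring
    _ ≤ σ₂ * (σ₁ + σ₂) / (σ₁ - σ₂) * (1 / σ₂ - r) := by gcongr

theorem volume_fraction_upper_bound_normalized_general
    (Ω : Set (Fin 2 → ℝ)) (hΩpos : 0 < (volume Ω).toReal)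
    (χ₁ : (Fin 2 → ℝ) → ℝ) (hχmeas : Measurable χ₁)
    (hχ01 : ∀ x, χ₁ x = 0 ∨ χ₁ x = 1)
    (σ₁ σ₂ : ℝ) (hσ₂ : 0 < σ₂) (hσ : σ₂ < σ₁)
    (σ : (Fin 2 → ℝ) → ℝ)
    (hσdef : ∀ x, σ x = σ₁ * χ₁ x + σ₂ * (1 - χ₁ x))
    (f₁ f₂ : ℝ) (hf₁ : f₁ = avg Ω χ₁) (hf₂ : f₂ = 1 - f₁)
    (e₁ e₂ : (Fin 2 → ℝ) → (Fin 2 → ℝ))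
    (he₁ : MemLp e₁ 2 (volume.restrict Ω))
    (he₂ : MemLp e₂ 2 (volume.restrict Ω))
    -- normalization `⟨e₁⟩ = (1,0)ᵀ`, `⟨e₂⟩ = (0,1)ᵀ`
    (he₁avg : avg Ω (fun x => e₁ x 0) = 1 ∧ avg Ω (fun x => e₁ x 1) = 0)
    (he₂avg : avg Ω (fun x => e₂ x 0) = 0 ∧ avg Ω (fun x => e₂ x 1) = 1)
    (A : Matrix (Fin 2) (Fin 2) ℝ)
    (hA11 : A 0 0 = avg Ω (fun x => σ x * (e₁ x ⬝ᵥ e₁ x)))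
    (hA12 : A 0 1 = avg Ω (fun x => σ x * (e₁ x ⬝ᵥ e₂ x)))
    (hA21 : A 1 0 = avg Ω (fun x => σ x * (e₂ x ⬝ᵥ e₁ x)))
    (hA22 : A 1 1 = avg Ω (fun x => σ x * (e₂ x ⬝ᵥ e₂ x)))
    (b' : ℝ) (hb' : b' = avg Ω (fun x => e₁ x ⬝ᵥ Rperp.mulVec (e₂ x))) :
    σ₂ ^ 2 * b' ^ 2 ≤ A.det ∧
    A.trace - 2 * b' * σ₂ ≤
      (f₂ / σ₂ + 2 * f₁ / (σ₁ + σ₂)) * (A.det - b' ^ 2 * σ₂ ^ 2) ∧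
    (σ₂ ^ 2 * b' ^ 2 < A.det →
      f₁ ≤ σ₂ * (σ₁ + σ₂) / (σ₁ - σ₂) *
        (1 / σ₂ - (A.trace - 2 * b' * σ₂) / (A.det - b' ^ 2 * σ₂ ^ 2))) := by
  have : IsFiniteMeasure (volume.restrict Ω) :=
    isFiniteMeasure_restrict.mpr (ENNReal.toReal_pos_iff.mp hΩpos).2.ne
  have he : ∀ i, MemLp (![e₁, e₂] i) 2 (volume.restrict Ω) := Fin.forall_fin_two.mpr ⟨he₁, he₂⟩
  have he_avg : ∀ i k, avg Ω (fun x => ![e₁, e₂] i x k) = (1 : Matrix (Fin 2) (Fin 2) ℝ) i k := by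
    simp [Fin.forall_fin_two, he₁avg, he₂avg]
  have hσm : Measurable σ := funext hσdef ▸ by fun_prop
  have hσI : ∀ x, σ x ∈ Set.Icc σ₂ σ₁ := fun x => by
    rcases hχ01 x with h | h <;> simp [hσdef, h, hσ.le]
  have hA : A = energyMatrix Ω σ ![e₁, e₂] := by
    ext i j
    fin_cases i <;> fin_cases j <;> simp [energyMatrix, hA11, hA12, hA21, hA22]
  have hb : b' = crossAvg Ω ![e₁, e₂] := hb'
  have hc : avg Ω (fun x => 2 / (σ x + σ₂)) = f₂ / σ₂ + 2 * f₁ / (σ₁ + σ₂) := by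
    rw [hf₂, hf₁]
    exact avg_two_div_add_of_two_phase hΩpos hχmeas hχ01 hσdef
  have hdet := sq_mul_sq_crossAvg_le_det hσ₂ hσm hσI he he_avg
  have htrace := trace_sub_le_avg_mul_det_sub hΩpos hσ₂ hσm hσI he he_avg
  rw [← hA, ← hb] at hdet htrace
  rw [hc] at htrace
  refine ⟨hdet, htrace, fun hpos => le_mul_inv_sub_of_le_two_phase_mean hσ₂ hσ ?_⟩
  rw [div_le_iff₀ (by linarith), ← hf₂]
  linarith

/-- Dual translation bound, yielding the upper bound on the volume fraction for
normalized electric fields (inequalities (2.52) and (2.58) of the paper). -/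
theorem volume_fraction_upper_bound_normalized
    (Ω : Set (Fin 2 → ℝ)) (hΩmeas : MeasurableSet Ω)
    (hΩbdd : Bornology.IsBounded Ω) (hΩpos : 0 < (volume Ω).toReal)
    (χ₁ : (Fin 2 → ℝ) → ℝ) (hχmeas : Measurable χ₁)
    (hχ01 : ∀ x, χ₁ x = 0 ∨ χ₁ x = 1)
    (σ₁ σ₂ : ℝ) (hσ₂ : 0 < σ₂) (hσ : σ₂ < σ₁)
    (σ : (Fin 2 → ℝ) → ℝ)
    (hσdef : ∀ x, σ x = σ₁ * χ₁ x + σ₂ * (1 - χ₁ x))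
    (f₁ f₂ : ℝ) (hf₁ : f₁ = avg Ω χ₁) (hf₂ : f₂ = 1 - f₁)
    (e₁ e₂ : (Fin 2 → ℝ) → (Fin 2 → ℝ))
    (he₁ : MemLp e₁ 2 (volume.restrict Ω))
    (he₂ : MemLp e₂ 2 (volume.restrict Ω))
    -- normalization `⟨e₁⟩ = (1,0)ᵀ`, `⟨e₂⟩ = (0,1)ᵀ`
    (he₁avg : avg Ω (fun x => e₁ x 0) = 1 ∧ avg Ω (fun x => e₁ x 1) = 0)
    (he₂avg : avg Ω (fun x => e₂ x 0) = 0 ∧ avg Ω (fun x => e₂ x 1) = 1)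
    (A : Matrix (Fin 2) (Fin 2) ℝ)
    (hA11 : A 0 0 = avg Ω (fun x => σ x * (e₁ x ⬝ᵥ e₁ x)))
    (hA12 : A 0 1 = avg Ω (fun x => σ x * (e₁ x ⬝ᵥ e₂ x)))
    (hA21 : A 1 0 = avg Ω (fun x => σ x * (e₂ x ⬝ᵥ e₁ x)))
    (hA22 : A 1 1 = avg Ω (fun x => σ x * (e₂ x ⬝ᵥ e₂ x)))
    (b' : ℝ) (hb' : b' = avg Ω (fun x => e₁ x ⬝ᵥ Rperp.mulVec (e₂ x))) :
    σ₂ ^ 2 * b' ^ 2 ≤ A.det ∧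
    A.trace - 2 * b' * σ₂ ≤
      (f₂ / σ₂ + 2 * f₁ / (σ₁ + σ₂)) * (A.det - b' ^ 2 * σ₂ ^ 2) ∧
    (σ₂ ^ 2 * b' ^ 2 < A.det →
      f₁ ≤ σ₂ * (σ₁ + σ₂) / (σ₁ - σ₂) *
        (1 / σ₂ - (A.trace - 2 * b' * σ₂) / (A.det - b' ^ 2 * σ₂ ^ 2))) :=
  volume_fraction_upper_bound_normalized_general Ω hΩpos χ₁ hχmeas hχ01 σ₁ σ₂ hσ₂ hσ σ hσdef f₁ f₂
    hf₁ hf₂ e₁ e₂ he₁ he₂ he₁avg he₂avg A hA11 hA12 hA21 hA22 b' hb'
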